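/- arXiv:1607.03072 — 6 statements merged into one kernel-verified Lean document; each statement's English description precedes it below -/
import Mathlib

section
/- Let λ : ℝ → ℝ be a smooth (or real-analytic) function with λ(0) = 0 and λ(δ) = C₀ δ^α + O(δ^{α+1}) as δ → 0, where C₀ > 0 and α ≥ 4 is an even integer. Then, as δ → 0⁺, the quantity d²/dk² [ 1/(λ(k) − λ(k+δ)) ] evaluated at k = 0 is asymptotic to −C₀⁻¹ α(α+1) δ^{−α−2}; i.e. the second derivative at 0 of k ↦ 1/(λ(k) − λ(k+δ)) equals −C₀⁻¹α(α+1)δ^{−α−2}(1 + o(1)). -/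
open Asymptotics Filter

private lemma iterDW_eq {g : ℝ → ℝ} (hg : ∀ n : ℕ, ContDiff ℝ n g) {a b x : ℝ} (hab : a < b)
    (hx : x ∈ Set.Icc a b) (n : ℕ) :
    iteratedDerivWithin n g (Set.Icc a b) x = iteratedDeriv n g x := by
  have hg' : ContDiff ℝ (n : ℕ∞) g := by exact_mod_cast hg n
  have H : HasFTaylorSeriesUpTo (n : ℕ∞) g (ftaylorSeries ℝ g) :=
    contDiff_iff_ftaylorSeries.mp hg'
  have h2 := (H.hasFTaylorSeriesUpToOn (Set.Icc a b)).eq_iteratedFDerivWithin_of_uniqueDiffOn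
    (m := n) (by exact_mod_cast le_rfl) (uniqueDiffOn_Icc hab) hx
  rw [iteratedDerivWithin_eq_iteratedFDerivWithin, ← h2, iteratedDeriv_eq_iteratedFDeriv]
  rfl

private lemma taylor_bound {g : ℝ → ℝ} (hg : ∀ n : ℕ, ContDiff ℝ n g) {n : ℕ}
    (hv : ∀ j ≤ n, iteratedDeriv j g 0 = 0) {x : ℝ} (hx : 0 < x) :
    ∃ x' ∈ Set.Ioo 0 x, g x = iteratedDeriv (n + 1) g x' * x ^ (n + 1) / ((n + 1).factorial : ℝ) := by
  have hdiffOn : DifferentiableOn ℝ (iteratedDerivWithin n g (Set.Icc 0 x)) (Set.Ioo 0 x) := by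
    have hd : DifferentiableOn ℝ (iteratedDeriv n g) (Set.Ioo 0 x) :=
      ((hg (n + 1)).differentiable_iteratedDeriv n
        (by exact_mod_cast n.lt_succ_self)).differentiableOn
    exact hd.congr (fun t ht => iterDW_eq hg hx (Set.Ioo_subset_Icc_self ht) n)
  obtain ⟨x', hx', heq⟩ := taylor_mean_remainder_lagrange (f := g) (x₀ := 0) hx.ne
    (by rw [Set.uIcc_of_le hx.le]; exact (hg n).contDiffOn)
    (by rw [Set.uIcc_of_le hx.le, Set.uIoo_of_le hx.le]; exact hdiffOn)
  rw [Set.uIoo_of_le hx.le] at hx'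
  rw [Set.uIcc_of_le hx.le] at heq
  refine ⟨x', hx', ?_⟩
  have hT : taylorWithinEval g n (Set.Icc 0 x) 0 x = 0 := by
    rw [taylor_within_apply]
    refine Finset.sum_eq_zero fun k hk => ?_
    rw [iterDW_eq hg hx (Set.left_mem_Icc.2 hx.le) k,
      hv k (by simpa [Nat.lt_succ_iff] using hk)]
    simp
  rw [hT, sub_zero] at heq
  rw [heq, iterDW_eq hg hx (Set.Ioo_subset_Icc_self hx') (n + 1)]
  simp

private lemma growth {g : ℝ → ℝ} (hg : ∀ n : ℕ, ContDiff ℝ n g) {n : ℕ}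
    (hv : ∀ j ≤ n, iteratedDeriv j g 0 = 0) {r : ℝ} (hr : 0 < r) :
    ∃ K : ℝ, ∀ x : ℝ, 0 < x → x ≤ r → |g x| ≤ K * x ^ (n + 1) := by
  have hcont : ContinuousOn (iteratedDeriv (n + 1) g) (Set.Icc 0 r) :=
    ((hg (n + 2)).continuous_iteratedDeriv (n + 1)
      (by exact_mod_cast Nat.le_succ _)).continuousOn
  obtain ⟨K, hK⟩ := isCompact_Icc.exists_bound_of_continuousOn hcont
  refine ⟨K, fun x hx hxr => ?_⟩
  obtain ⟨x', hx', heq⟩ := taylor_bound hg hv hx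
  have hx'mem : x' ∈ Set.Icc (0:ℝ) r := ⟨hx'.1.le, hx'.2.le.trans hxr⟩
  have hKx : |iteratedDeriv (n + 1) g x'| ≤ K := hK x' hx'mem
  have hK0 : (0:ℝ) ≤ K := le_trans (abs_nonneg _) hKx
  rw [heq, abs_div, abs_mul, abs_pow, abs_of_pos hx]
  
  have h2 : (1:ℝ) ≤ ((n+1).factorial : ℝ) := by exact_mod_cast Nat.one_le_iff_ne_zero.mpr (n+1).factorial_ne_zero
  rw [abs_of_pos (by positivity : (0:ℝ) < ((n + 1).factorial : ℝ))]
  calc |iteratedDeriv (n + 1) g x'| * x ^ (n + 1) / ((n + 1).factorial : ℝ)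
      ≤ |iteratedDeriv (n + 1) g x'| * x ^ (n + 1) := div_le_self (by positivity) h2
    _ ≤ K * x ^ (n + 1) := mul_le_mul_of_nonneg_right hKx (by positivity)

private lemma vanish {g : ℝ → ℝ} (hg : ∀ n : ℕ, ContDiff ℝ n g) (hg0 : g 0 = 0) {m : ℕ}
    (hO : g =O[nhds 0] fun x => x ^ (m + 1)) : ∀ j ≤ m, iteratedDeriv j g 0 = 0 := by
  obtain ⟨C, hC, hbound⟩ := hO.exists_pos
  rw [Asymptotics.isBigOWith_iff] at hbound
  obtain ⟨r, hr, hb⟩ := Metric.eventually_nhds_iff.mp hbound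
  simp only [Real.norm_eq_abs, Real.dist_eq, sub_zero] at hb
  intro j
  induction j using Nat.strong_induction_on with
  | _ j IH =>
    intro hj
    match j, hj with
    | 0, _ => simpa using hg0
    | (i+1), hj =>
      set D := iteratedDeriv (i + 1) g with hD
      have hcont : Continuous D :=
        (hg (i + 2)).continuous_iteratedDeriv (i + 1) (by exact_mod_cast Nat.le_succ _)
      have key : ∀ ε > (0:ℝ), |D 0| ≤ ε := by
        intro ε hε
        obtain ⟨η, hη, hcl⟩ := Metric.continuousAt_iff.mp (hcont.continuousAt (x := 0)) (ε/2) (by linarith)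
        simp only [Real.dist_eq, sub_zero] at hcl
        have hfac : (0:ℝ) < ((i+1).factorial : ℝ) := by positivity
        set x : ℝ := min (min (η/2) (r/2)) (min 1 (ε/(2 * (((i+1).factorial : ℝ) * C + 1))))
          with hxdef
        have hx : 0 < x := by
          apply lt_min (lt_min (by linarith) (by linarith)) (lt_min one_pos (by positivity))
        have hxη : x < η := lt_of_le_of_lt (le_trans (min_le_left _ _) (min_le_left _ _)) (by linarith)
        have hxr : x < r := lt_of_le_of_lt (le_trans (min_le_left _ _) (min_le_right _ _)) (by linarith)
        have hx1 : x ≤ 1 := le_trans (min_le_right _ _) (min_le_left _ _)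
        have hxε : x ≤ ε/(2 * (((i+1).factorial : ℝ) * C + 1)) :=
          le_trans (min_le_right _ _) (min_le_right _ _)
        obtain ⟨x', hx', heq⟩ := taylor_bound hg (n := i)
          (fun k hk => IH k (by omega) (by omega)) hx
        have hgx : |g x| ≤ C * x ^ (m+1) := by
          have := hb (y := x) (by rw [abs_of_pos hx]; exact hxr)
          rwa [abs_pow, abs_of_pos hx] at this
        have hxpow : x ^ (m+1) ≤ x ^ (i+2) := by
          apply pow_le_pow_of_le_one hx.le hx1; omega
        have hDx' : |D x'| = |g x| * ((i+1).factorial : ℝ) / x ^ (i+1) := by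
          rw [heq, abs_div, abs_mul, abs_pow, abs_of_pos hx, abs_of_pos hfac]
          field_simp
          rfl
        have hDx'le : |D x'| ≤ ((i+1).factorial : ℝ) * C * x := by
          rw [hDx']
          have h1 : |g x| * ((i+1).factorial : ℝ) ≤ C * x ^ (i+2) * ((i+1).factorial : ℝ) := by
            apply mul_le_mul_of_nonneg_right _ hfac.le
            exact le_trans hgx (mul_le_mul_of_nonneg_left hxpow hC.le)
          rw [div_le_iff₀ (by positivity)]
          calc |g x| * ((i+1).factorial : ℝ) ≤ C * x ^ (i+2) * ((i+1).factorial : ℝ) := h1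
            _ = ((i+1).factorial : ℝ) * C * x * x ^ (i+1) := by ring
        have hDx'small : |D x'| < ε/2 := by
          apply lt_of_le_of_lt hDx'le
          have hlt : ((i+1).factorial : ℝ) * C * x ≤ ((i+1).factorial : ℝ) * C * (ε/(2 * (((i+1).factorial : ℝ) * C + 1))) :=
            mul_le_mul_of_nonneg_left hxε (by positivity)
          apply lt_of_le_of_lt hlt
          rw [show ((i+1).factorial : ℝ) * C * (ε/(2 * (((i+1).factorial : ℝ) * C + 1))) =
            (((i+1).factorial : ℝ) * C * ε)/(2 * (((i+1).factorial : ℝ) * C + 1)) by ring,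
            div_lt_div_iff₀ (by positivity) (by norm_num)]
          nlinarith
        have hclose : |D 0 - D x'| < ε/2 := by
          have := hcl (x := x') (by
            rw [abs_of_pos hx'.1]; exact lt_trans hx'.2 hxη)
          rw [abs_sub_comm]
          exact this
        calc |D 0| ≤ |D 0 - D x'| + |D x'| := by
              have := abs_sub_abs_le_abs_sub (D 0) (D x'); nlinarith [abs_nonneg (D x')]
          _ ≤ ε := by linarith
      by_contra hne
      have : |D 0| / 2 > 0 := by positivity
      have := key (|D 0|/2) this
      have : |D 0| > 0 := abs_pos.mpr hne
      linarith

set_option maxHeartbeats 1000000 in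
/-- For a smooth band function `λ` with `λ(0) = 0` and `λ(δ) = C₀δ^α + O(δ^{α+1})`
(`C₀ > 0`, `α ≥ 4` even), the second derivative at `k = 0` of
`k ↦ 1/(λ(k) − λ(k+δ))` is asymptotic to `−C₀⁻¹ α(α+1) δ^{−α−2}` as `δ → 0⁺`. -/
theorem stmt2 (lam : ℝ → ℝ) (C₀ : ℝ) (α : ℕ)
    (hsmooth : ContDiff ℝ (⊤ : ℕ∞) lam) (hC₀ : 0 < C₀) (hα : 4 ≤ α) (heven : Even α)
    (h0 : lam 0 = 0)
    (hasymp : (fun δ : ℝ => lam δ - C₀ * δ ^ α) =O[nhds 0] fun δ : ℝ => δ ^ (α + 1)) :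
    (fun δ : ℝ => deriv (deriv fun k : ℝ => 1 / (lam k - lam (k + δ))) 0)
      ~[nhdsWithin 0 (Set.Ioi 0)]
    (fun δ : ℝ => -C₀⁻¹ * (α : ℝ) * ((α : ℝ) + 1) / δ ^ (α + 2)) := by
  obtain ⟨m, rfl⟩ : ∃ m, α = m + 4 := ⟨α - 4, by omega⟩
  have hlamN : ∀ n : ℕ, ContDiff ℝ n lam := fun n => hsmooth.of_le (by exact_mod_cast le_top)
  have hlaminf : ContDiff ℝ ((⊤ : ℕ∞) : WithTop ℕ∞) lam := hsmooth.of_le (by simp)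
  have hlamD : Differentiable ℝ lam := (contDiff_infty_iff_deriv.mp hlaminf).1
  have hdlinf : ContDiff ℝ ((⊤ : ℕ∞) : WithTop ℕ∞) (deriv lam) :=
    (contDiff_infty_iff_deriv.mp hlaminf).2
  have hdlD : Differentiable ℝ (deriv lam) := (contDiff_infty_iff_deriv.mp hdlinf).1
  -- the remainder function
  set h : ℝ → ℝ := fun x => lam x - C₀ * x ^ (m + 4) with hhdef
  have hN : ∀ n : ℕ, ContDiff ℝ n h :=
    fun n => (hlamN n).sub (contDiff_const.mul (contDiff_id.pow _))
  have hinf : ContDiff ℝ ((⊤ : ℕ∞) : WithTop ℕ∞) h :=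
    hlaminf.sub (contDiff_const.mul (contDiff_id.pow _))
  have hdhinf : ContDiff ℝ ((⊤ : ℕ∞) : WithTop ℕ∞) (deriv h) := (contDiff_infty_iff_deriv.mp hinf).2
  have hdhN : ∀ n : ℕ, ContDiff ℝ n (deriv h) := fun n => hdhinf.of_le (by exact_mod_cast le_top)
  have hddhN : ∀ n : ℕ, ContDiff ℝ n (deriv (deriv h)) :=
    fun n => (contDiff_infty_iff_deriv.mp hdhinf).2.of_le (by exact_mod_cast le_top)
  have hvan : ∀ j ≤ m + 4, iteratedDeriv j h 0 = 0 :=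
    vanish hN (by simp [hhdef, h0]) hasymp
  -- derivative formulas
  have hdh : ∀ x : ℝ, deriv h x = deriv lam x - C₀ * (((m : ℝ) + 4) * x ^ (m + 3)) := by
    intro x
    have h1 : HasDerivAt (fun y : ℝ => C₀ * y ^ (m + 4))
        (C₀ * (((m : ℝ) + 4) * x ^ (m + 3))) x := by
      have := (hasDerivAt_pow (m + 4) x).const_mul C₀
      norm_num at this ⊢
      exact this
    exact ((hlamD x).hasDerivAt.sub h1).deriv
  have hdh' : deriv h = fun x => deriv lam x - C₀ * (((m : ℝ) + 4) * x ^ (m + 3)) := funext hdh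
  have hddh : ∀ x : ℝ, deriv (deriv h) x
      = deriv (deriv lam) x - C₀ * (((m : ℝ) + 4) * (((m : ℝ) + 3) * x ^ (m + 2))) := by
    intro x
    rw [hdh']
    have h1 : HasDerivAt (fun y : ℝ => C₀ * (((m : ℝ) + 4) * y ^ (m + 3)))
        (C₀ * (((m : ℝ) + 4) * (((m : ℝ) + 3) * x ^ (m + 2)))) x := by
      have := ((hasDerivAt_pow (m + 3) x).const_mul ((m : ℝ) + 4)).const_mul C₀
      norm_num at this ⊢
      exact this
    exact ((hdlD x).hasDerivAt.sub h1).deriv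
  have hl'0 : deriv lam 0 = 0 := by
    have h1 : deriv h 0 = 0 := by
      rw [← iteratedDeriv_one]; exact hvan 1 (by omega)
    have h2 := hdh 0
    rw [h1] at h2
    simp [zero_pow] at h2
    linarith
  have hl''0 : deriv (deriv lam) 0 = 0 := by
    have h1 : deriv (deriv h) 0 = 0 := by
      have : iteratedDeriv 2 h = deriv (deriv h) := by
        rw [iteratedDeriv_succ, iteratedDeriv_one]
      rw [← this]; exact hvan 2 (by omega)
    have h2 := hddh 0
    rw [h1] at h2
    simp [zero_pow] at h2
    linarith
  -- quantitative bounds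
  obtain ⟨M, hM, hMbound⟩ := hasymp.exists_pos
  rw [Asymptotics.isBigOWith_iff] at hMbound
  obtain ⟨r, hr, hMb⟩ := Metric.eventually_nhds_iff.mp hMbound
  simp only [Real.norm_eq_abs, Real.dist_eq, sub_zero] at hMb
  have hvdh : ∀ j ≤ m + 3, iteratedDeriv j (deriv h) 0 = 0 := by
    intro j hj
    have := congrFun (iteratedDeriv_succ' (n := j) (f := h)) 0
    rw [← this]
    exact hvan (j + 1) (by omega)
  have hvddh : ∀ j ≤ m + 2, iteratedDeriv j (deriv (deriv h)) 0 = 0 := by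
    intro j hj
    have e1 := congrFun (iteratedDeriv_succ' (n := j) (f := deriv h)) 0
    have e2 := congrFun (iteratedDeriv_succ' (n := j + 1) (f := h)) 0
    rw [← e1, ← e2]
    exact hvan (j + 2) (by omega)
  obtain ⟨K₁, hK₁⟩ := growth hdhN hvdh hr
  obtain ⟨K₂, hK₂⟩ := growth hddhN hvddh hr
  -- separation: lam k < lam (k + δ) for |k| ≤ δ/4
  set c : ℝ := C₀ * ((3 / 4 : ℝ) ^ (m + 4) - (1 / 4 : ℝ) ^ (m + 4)) with hcdef
  have hcpos : 0 < c := by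
    apply mul_pos hC₀
    apply sub_pos.mpr
    exact pow_lt_pow_left₀ (by norm_num) (by norm_num) (by omega)
  set δ₀ : ℝ := min (r / 2) (c / (M * (1 + 2 ^ (m + 5)) + 1)) with hδ₀def
  have hδ₀pos : 0 < δ₀ := lt_min (by linarith) (by positivity)
  have hδ₀r : δ₀ ≤ r / 2 := min_le_left _ _
  have hsep : ∀ δ : ℝ, 0 < δ → δ < δ₀ → ∀ k : ℝ, |k| ≤ δ / 4 → lam k < lam (k + δ) := by
    intro δ hδ hδlt k hk
    have hδr : δ < r / 2 := lt_of_lt_of_le hδlt hδ₀r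
    have hδc : M * (1 + 2 ^ (m + 5)) * δ < c := by
      have h1 : δ < c / (M * (1 + 2 ^ (m + 5)) + 1) := lt_of_lt_of_le hδlt (min_le_right _ _)
      rw [lt_div_iff₀ (by positivity)] at h1
      nlinarith
    have hkr : |k| < r := by linarith [abs_nonneg k]
    have hbk := hMb (y := k) hkr
    have htlo : 3 / 4 * δ ≤ k + δ := by
      have := (abs_le.mp hk).1; linarith
    have hthi : k + δ ≤ 5 / 4 * δ := by
      have := (abs_le.mp hk).2; linarith
    have htpos : 0 < k + δ := by linarith
    have htr : |k + δ| < r := by rw [abs_of_pos htpos]; linarith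
    have hbt := hMb (y := k + δ) htr
    rw [abs_pow] at hbk hbt
    -- turn into explicit bounds
    have hX : (0:ℝ) < δ ^ (m + 4) := by positivity
    have hb1 : lam k ≤ C₀ * ((1 / 4 : ℝ) ^ (m + 4) * δ ^ (m + 4)) + M * (δ ^ (m + 4) * δ) := by
      have e1 : k ^ (m + 4) ≤ (1 / 4 : ℝ) ^ (m + 4) * δ ^ (m + 4) := by
        calc k ^ (m + 4) ≤ |k ^ (m + 4)| := le_abs_self _
          _ = |k| ^ (m + 4) := abs_pow k _
          _ ≤ (δ / 4) ^ (m + 4) := pow_le_pow_left₀ (abs_nonneg k) hk _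
          _ = (1 / 4 : ℝ) ^ (m + 4) * δ ^ (m + 4) := by rw [← mul_pow]; ring_nf
      have e2 : |k| ^ (m + 5) ≤ δ ^ (m + 4) * δ := by
        calc |k| ^ (m + 5) ≤ δ ^ (m + 5) :=
              pow_le_pow_left₀ (abs_nonneg k) (by linarith [abs_le.mp hk]) _
          _ = δ ^ (m + 4) * δ := by rw [pow_succ]
      have e3 : lam k - C₀ * k ^ (m + 4) ≤ M * |k| ^ (m + 5) :=
        le_trans (le_abs_self _) hbk
      nlinarith
    have hb2 : C₀ * ((3 / 4 : ℝ) ^ (m + 4) * δ ^ (m + 4))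
        - M * ((2 : ℝ) ^ (m + 5) * (δ ^ (m + 4) * δ)) ≤ lam (k + δ) := by
      have e1 : (3 / 4 : ℝ) ^ (m + 4) * δ ^ (m + 4) ≤ (k + δ) ^ (m + 4) := by
        calc (3 / 4 : ℝ) ^ (m + 4) * δ ^ (m + 4) = (3 / 4 * δ) ^ (m + 4) := by rw [mul_pow]
          _ ≤ (k + δ) ^ (m + 4) := pow_le_pow_left₀ (by positivity) htlo _
      have e2 : |k + δ| ^ (m + 5) ≤ (2 : ℝ) ^ (m + 5) * (δ ^ (m + 4) * δ) := by
        calc |k + δ| ^ (m + 5) ≤ (2 * δ) ^ (m + 5) := by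
              apply pow_le_pow_left₀ (abs_nonneg _)
              rw [abs_of_pos htpos]; linarith
          _ = (2 : ℝ) ^ (m + 5) * (δ ^ (m + 4) * δ) := by
              rw [mul_pow]; ring
      have e3 : -(M * |k + δ| ^ (m + 5)) ≤ lam (k + δ) - C₀ * (k + δ) ^ (m + 4) :=
        neg_le_of_abs_le hbt
      nlinarith
    have hprod : 0 < (c - M * (1 + 2 ^ (m + 5)) * δ) * δ ^ (m + 4) :=
      mul_pos (sub_pos.mpr hδc) hX
    rw [hcdef] at hprod
    linarith [hprod, hb1, hb2]
  have hlampos : ∀ δ : ℝ, 0 < δ → δ < δ₀ → 0 < lam δ := by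
    intro δ hδ hδlt
    have := hsep δ hδ hδlt 0 (by simp; linarith)
    simpa [h0] using this
  -- explicit formula for the second derivative at 0
  have hmain : ∀ δ : ℝ, 0 < δ → δ < δ₀ →
      deriv (deriv fun k : ℝ => 1 / (lam k - lam (k + δ))) 0
        = (deriv (deriv lam) δ * lam δ - 2 * (deriv lam δ) ^ 2) / (lam δ) ^ 3 := by
    intro δ hδ hδlt
    have hlδ : 0 < lam δ := hlampos δ hδ hδlt
    set F : ℝ → ℝ := fun k => lam k - lam (k + δ) with hFdef
    have hDF : ∀ k : ℝ, HasDerivAt F (deriv lam k - deriv lam (k + δ)) k := by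
      intro k
      exact (hlamD k).hasDerivAt.sub
        (HasDerivAt.comp_add_const k δ (hlamD (k + δ)).hasDerivAt)
    have hFneg : ∀ k : ℝ, k ∈ Set.Ioo (-(δ / 4)) (δ / 4) → F k < 0 := by
      intro k hk
      have : lam k < lam (k + δ) := hsep δ hδ hδlt k (by
        rw [abs_le]; exact ⟨hk.1.le, hk.2.le⟩)
      simpa [hFdef] using sub_neg.mpr this
    have hmem : Set.Ioo (-(δ / 4)) (δ / 4) ∈ nhds (0 : ℝ) :=
      Ioo_mem_nhds (by linarith) (by linarith)
    have e1 : deriv (fun k : ℝ => 1 / F k)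
        =ᶠ[nhds (0 : ℝ)] fun k => -(deriv lam k - deriv lam (k + δ)) / (F k) ^ 2 := by
      filter_upwards [hmem] with k hk
      have hFk : F k ≠ 0 := (hFneg k hk).ne
      have := ((hDF k).inv hFk).deriv
      simp only [one_div]
      exact this
    have e2 : deriv (deriv fun k : ℝ => 1 / F k) 0
        = deriv (fun k => -(deriv lam k - deriv lam (k + δ)) / (F k) ^ 2) 0 := e1.deriv_eq
    have hF0 : F 0 = -lam δ := by simp [hFdef, h0]
    have hF0ne : F 0 ≠ 0 := by rw [hF0]; simpa using hlδ.ne'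
    have hP : HasDerivAt (fun k : ℝ => -(deriv lam k - deriv lam (k + δ)))
        (-(deriv (deriv lam) 0 - deriv (deriv lam) δ)) 0 := by
      apply HasDerivAt.neg
      have hbase := (hdlD 0).hasDerivAt.sub
        (HasDerivAt.comp_add_const 0 δ (hdlD (0 + δ)).hasDerivAt)
      simp only [zero_add] at hbase
      exact hbase
    have hQ : HasDerivAt (fun k : ℝ => (F k) ^ 2)
        ((2 : ℝ) * F 0 ^ 1 * (deriv lam 0 - deriv lam (0 + δ))) 0 := by
      have hpow := (hDF 0).pow (n := 2)
      norm_num at hpow ⊢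
      exact hpow
    have hQ0 : F 0 ^ 2 ≠ 0 := pow_ne_zero _ hF0ne
    have e3 := ((hP.fun_div hQ hQ0).deriv)
    rw [e2, e3]
    rw [hF0]
    simp only [zero_add, hl'0, hl''0, pow_one, zero_sub, neg_neg]
    field_simp
  -- limits of rescaled quantities as δ → 0⁺
  have hlin : ∀ K : ℝ, Tendsto (fun δ : ℝ => K * δ) (nhdsWithin 0 (Set.Ioi 0)) (nhds 0) := by
    intro K
    have h1 : Tendsto (fun δ : ℝ => K * δ) (nhds 0) (nhds (K * 0)) :=
      (continuous_const.mul continuous_id).tendsto 0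
    rw [mul_zero] at h1
    exact h1.mono_left nhdsWithin_le_nhds
  have hA : Tendsto (fun δ : ℝ => lam δ / δ ^ (m + 4)) (nhdsWithin 0 (Set.Ioi 0))
      (nhds C₀) := by
    have hz : Tendsto (fun δ : ℝ => lam δ / δ ^ (m + 4) - C₀) (nhdsWithin 0 (Set.Ioi 0))
        (nhds 0) := by
      apply squeeze_zero_norm' (a := fun δ : ℝ => M * δ) _ (hlin M)
      filter_upwards [Ioo_mem_nhdsGT hr] with δ hδ
      have hδ0 : (0:ℝ) < δ := hδ.1
      have hpow : (0:ℝ) < δ ^ (m + 4) := by positivity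
      have hb := hMb (y := δ) (by rw [abs_of_pos hδ0]; exact hδ.2)
      rw [abs_pow, abs_of_pos hδ0] at hb
      have key : lam δ / δ ^ (m + 4) - C₀ = h δ / δ ^ (m + 4) := by
        have hh : h δ = lam δ - C₀ * δ ^ (m + 4) := rfl
        rw [hh, sub_div, mul_div_assoc, div_self hpow.ne', mul_one]
      rw [Real.norm_eq_abs, key, abs_div, abs_of_pos hpow, div_le_iff₀ hpow]
      calc |h δ| ≤ M * δ ^ (m + 4 + 1) := hb
        _ = M * δ * δ ^ (m + 4) := by ring
    have h2 := hz.add (tendsto_const_nhds (x := C₀))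
    rw [zero_add] at h2
    have e : (fun δ : ℝ => lam δ / δ ^ (m + 4) - C₀ + C₀) = fun δ : ℝ => lam δ / δ ^ (m + 4) := by
      funext δ; ring
    rw [← e]
    exact h2
  have hB : Tendsto (fun δ : ℝ => deriv lam δ / δ ^ (m + 3)) (nhdsWithin 0 (Set.Ioi 0))
      (nhds (((m : ℝ) + 4) * C₀)) := by
    have hz : Tendsto (fun δ : ℝ => deriv lam δ / δ ^ (m + 3) - ((m : ℝ) + 4) * C₀)
        (nhdsWithin 0 (Set.Ioi 0)) (nhds 0) := by
      apply squeeze_zero_norm' (a := fun δ : ℝ => K₁ * δ) _ (hlin K₁)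
      filter_upwards [Ioo_mem_nhdsGT hr] with δ hδ
      have hδ0 : (0:ℝ) < δ := hδ.1
      have hpow : (0:ℝ) < δ ^ (m + 3) := by positivity
      have hb := hK₁ δ hδ0 hδ.2.le
      have key : deriv lam δ / δ ^ (m + 3) - ((m : ℝ) + 4) * C₀ = deriv h δ / δ ^ (m + 3) := by
        rw [hdh δ]; field_simp
      rw [Real.norm_eq_abs, key, abs_div, abs_of_pos hpow, div_le_iff₀ hpow]
      calc |deriv h δ| ≤ K₁ * δ ^ (m + 3 + 1) := hb
        _ = K₁ * δ * δ ^ (m + 3) := by ring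
    have h2 := hz.add (tendsto_const_nhds (x := ((m : ℝ) + 4) * C₀))
    rw [zero_add] at h2
    have e : (fun δ : ℝ => deriv lam δ / δ ^ (m + 3) - ((m : ℝ) + 4) * C₀ + ((m : ℝ) + 4) * C₀)
        = fun δ : ℝ => deriv lam δ / δ ^ (m + 3) := by
      funext δ; ring
    rw [← e]
    exact h2
  have hCc : Tendsto (fun δ : ℝ => deriv (deriv lam) δ / δ ^ (m + 2))
      (nhdsWithin 0 (Set.Ioi 0)) (nhds (((m : ℝ) + 4) * (((m : ℝ) + 3) * C₀))) := by
    have hz : Tendsto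
        (fun δ : ℝ => deriv (deriv lam) δ / δ ^ (m + 2) - ((m : ℝ) + 4) * (((m : ℝ) + 3) * C₀))
        (nhdsWithin 0 (Set.Ioi 0)) (nhds 0) := by
      apply squeeze_zero_norm' (a := fun δ : ℝ => K₂ * δ) _ (hlin K₂)
      filter_upwards [Ioo_mem_nhdsGT hr] with δ hδ
      have hδ0 : (0:ℝ) < δ := hδ.1
      have hpow : (0:ℝ) < δ ^ (m + 2) := by positivity
      have hb := hK₂ δ hδ0 hδ.2.le
      have key : deriv (deriv lam) δ / δ ^ (m + 2) - ((m : ℝ) + 4) * (((m : ℝ) + 3) * C₀)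
          = deriv (deriv h) δ / δ ^ (m + 2) := by
        rw [hddh δ]; field_simp
      rw [Real.norm_eq_abs, key, abs_div, abs_of_pos hpow, div_le_iff₀ hpow]
      calc |deriv (deriv h) δ| ≤ K₂ * δ ^ (m + 2 + 1) := hb
        _ = K₂ * δ * δ ^ (m + 2) := by ring
    have h2 := hz.add (tendsto_const_nhds (x := ((m : ℝ) + 4) * (((m : ℝ) + 3) * C₀)))
    rw [zero_add] at h2
    have e : (fun δ : ℝ => deriv (deriv lam) δ / δ ^ (m + 2)
          - ((m : ℝ) + 4) * (((m : ℝ) + 3) * C₀) + ((m : ℝ) + 4) * (((m : ℝ) + 3) * C₀))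
        = fun δ : ℝ => deriv (deriv lam) δ / δ ^ (m + 2) := by
      funext δ; ring
    rw [← e]
    exact h2
  -- final assembly
  have hvne : ∀ᶠ δ : ℝ in nhdsWithin 0 (Set.Ioi 0),
      -C₀⁻¹ * ((m + 4 : ℕ) : ℝ) * (((m + 4 : ℕ) : ℝ) + 1) / δ ^ (m + 4 + 2) ≠ 0 := by
    filter_upwards [self_mem_nhdsWithin] with δ hδ
    have hδ0 : (0:ℝ) < δ := hδ
    have hnum : (0:ℝ) < C₀⁻¹ * ((m + 4 : ℕ) : ℝ) * (((m + 4 : ℕ) : ℝ) + 1) := by positivity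
    exact div_ne_zero (by nlinarith) (pow_ne_zero _ hδ0.ne')
  rw [Asymptotics.isEquivalent_iff_tendsto_one hvne]
  have hden_ne : C₀ ^ 3 * (-C₀⁻¹ * ((m : ℝ) + 4) * ((m : ℝ) + 5)) ≠ 0 := by
    have : (0:ℝ) < C₀ ^ 3 * (C₀⁻¹ * ((m : ℝ) + 4) * ((m : ℝ) + 5)) := by positivity
    intro hcon
    nlinarith
  have hφ : Tendsto (fun δ : ℝ =>
      ((deriv (deriv lam) δ / δ ^ (m + 2)) * (lam δ / δ ^ (m + 4))
        - 2 * (deriv lam δ / δ ^ (m + 3)) ^ 2)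
      / ((lam δ / δ ^ (m + 4)) ^ 3 * (-C₀⁻¹ * ((m : ℝ) + 4) * ((m : ℝ) + 5))))
      (nhdsWithin 0 (Set.Ioi 0)) (nhds 1) := by
    have h1 := (hCc.mul hA).sub ((hB.pow 2).const_mul 2)
    have h2 := (hA.pow 3).mul_const (-C₀⁻¹ * ((m : ℝ) + 4) * ((m : ℝ) + 5))
    have h3 := h1.div h2 hden_ne
    have hval : (((m : ℝ) + 4) * (((m : ℝ) + 3) * C₀) * C₀ - 2 * ((((m : ℝ) + 4) * C₀)) ^ 2)
        / (C₀ ^ 3 * (-C₀⁻¹ * ((m : ℝ) + 4) * ((m : ℝ) + 5))) = 1 := by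
      rw [div_eq_one_iff_eq hden_ne]
      field_simp
      ring
    rw [hval] at h3
    exact h3
  apply Tendsto.congr' _ hφ
  filter_upwards [Ioo_mem_nhdsGT hδ₀pos] with δ hδ
  have hδ0 : (0:ℝ) < δ := hδ.1
  have hlδ : 0 < lam δ := hlampos δ hδ.1 hδ.2
  simp only [Pi.div_apply]
  rw [hmain δ hδ.1 hδ.2]
  have hm4 : ((m + 4 : ℕ) : ℝ) = (m : ℝ) + 4 := by push_cast; ring
  rw [hm4]
  have hm4ne : ((m : ℝ) + 4) ≠ 0 := by positivity
  have hm5ne : ((m : ℝ) + 5) ≠ 0 := by positivity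
  have h45 : ((m : ℝ) + 4) + 1 = (m : ℝ) + 5 := by ring
  rw [h45]
  have hδne : δ ≠ 0 := hδ0.ne'
  have hlne : lam δ ≠ 0 := hlδ.ne'
  have hKpos : (0:ℝ) < C₀⁻¹ * ((m : ℝ) + 4) * ((m : ℝ) + 5) := by positivity
  have hKne : -C₀⁻¹ * ((m : ℝ) + 4) * ((m : ℝ) + 5) ≠ 0 := by nlinarith
  have hD1 : (lam δ / δ ^ (m + 4)) ^ 3 * (-C₀⁻¹ * ((m : ℝ) + 4) * ((m : ℝ) + 5)) ≠ 0 :=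
    mul_ne_zero (pow_ne_zero _ (div_ne_zero hlne (pow_ne_zero _ hδne))) hKne
  have hD2 : -C₀⁻¹ * ((m : ℝ) + 4) * ((m : ℝ) + 5) / δ ^ (m + 4 + 2) ≠ 0 :=
    div_ne_zero hKne (pow_ne_zero _ hδne)
  rw [div_eq_div_iff hD1 hD2]
  field_simp
  ring
end

section
/- Let λ(k) = C₀ k^α with C₀ > 0 and α ≥ 4 an even integer. Then for δ > 0 the function F(k) := 1/(λ(k) − λ(k+δ)) + 1/(λ(k) − λ(k−δ)) satisfies F''(0) = −2C₀⁻¹α(α+1)δ^{−α−2}; in particular F''(0) ≠ 0 for every δ > 0. -/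
/-!
Write `g_c(k) = C₀ k^α - C₀ (k + c)^α`, so that `F = 1/g_δ + 1/g_{-δ}`. For any twice
differentiable `g` with `g(x) ≠ 0` one has `(1/g)'' = (2 g'² - g g'') / g³`. At `k = 0` and
`α ≥ 3` the monomial `k^α` contributes nothing up to second order, so `g_c(0) = -C₀ c^α`,
`g_c'(0) = -C₀ α c^(α-1)`, `g_c''(0) = -C₀ α(α-1) c^(α-2)`, and `(1/g_c)''(0)` collapses to
`-α(α+1) / (C₀ c^(α+2))`. For even `α` the two shifts `c = ±δ` give the same value.
-/

open Filter Topology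

section

variable {𝕜 : Type*} [NontriviallyNormedField 𝕜]

def HasSecondDerivAt (f : 𝕜 → 𝕜) (f'' x : 𝕜) : Prop :=
  ∃ f' : 𝕜 → 𝕜, (∀ᶠ y in 𝓝 x, HasDerivAt f (f' y) y) ∧ HasDerivAt f' f'' x

theorem HasSecondDerivAt.deriv_deriv {f : 𝕜 → 𝕜} {f'' x : 𝕜} (hf : HasSecondDerivAt f f'' x) :
    deriv (deriv f) x = f'' := by
  obtain ⟨f', hf, hf'⟩ := hf
  exact (hf'.congr_of_eventuallyEq (hf.mono fun y hy => hy.deriv)).deriv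

theorem HasSecondDerivAt.add {f g : 𝕜 → 𝕜} {f'' g'' x : 𝕜} (hf : HasSecondDerivAt f f'' x)
    (hg : HasSecondDerivAt g g'' x) : HasSecondDerivAt (fun k => f k + g k) (f'' + g'') x := by
  obtain ⟨f', hf, hf'⟩ := hf
  obtain ⟨g', hg, hg'⟩ := hg
  exact ⟨fun y => f' y + g' y, (hf.and hg).mono fun y hy => hy.1.add hy.2, hf'.add hg'⟩

theorem hasSecondDerivAt_one_div {g g' : 𝕜 → 𝕜} {g'' x : 𝕜}
    (hg : ∀ᶠ y in 𝓝 x, HasDerivAt g (g' y) y) (hg' : HasDerivAt g' g'' x) (hx : g x ≠ 0) :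
    HasSecondDerivAt (fun k => 1 / g k) ((2 * g' x ^ 2 - g x * g'') / g x ^ 3) x := by
  have hgx := hg.self_of_nhds
  refine ⟨fun y => -g' y / g y ^ 2, ?_, ?_⟩
  · filter_upwards [hg, hgx.continuousAt.eventually_ne hx] with y hy hy0
    simpa only [one_div] using hy.fun_inv hy0
  · refine (hg'.fun_neg.fun_div (hgx.fun_pow 2) (pow_ne_zero 2 hx)).congr_deriv ?_
    field_simp
    ring

theorem hasDerivAt_mul_pow_sub_mul_add_pow (C c : 𝕜) (n : ℕ) (x : 𝕜) :
    HasDerivAt (fun k => C * k ^ n - C * (k + c) ^ n)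
      (C * n * x ^ (n - 1) - C * n * (x + c) ^ (n - 1)) x := by
  have hshift := ((hasDerivAt_id x).add_const c).fun_pow n
  simpa only [id, mul_one, mul_assoc] using
    ((hasDerivAt_pow n x).const_mul C).fun_sub (hshift.const_mul C)

theorem hasSecondDerivAt_one_div_mul_pow_sub_mul_add_pow_zero {C c : 𝕜} {n : ℕ} (hC : C ≠ 0)
    (hc : c ≠ 0) (hn : 3 ≤ n) :
    HasSecondDerivAt (fun k => 1 / (C * k ^ n - C * (k + c) ^ n))
      (-(n * (n + 1)) / (C * c ^ (n + 2))) 0 := by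
  have hg0 : C * (0 : 𝕜) ^ n - C * (0 + c) ^ n ≠ 0 := by
    simp [zero_pow (by omega : n ≠ 0), hC, hc]
  convert hasSecondDerivAt_one_div
    (.of_forall fun y => hasDerivAt_mul_pow_sub_mul_add_pow C c n y)
    (hasDerivAt_mul_pow_sub_mul_add_pow (C * n) c (n - 1) 0) hg0 using 1
  obtain ⟨m, rfl⟩ : ∃ m, n = m + 3 := ⟨n - 3, by omega⟩
  rw [show m + 3 - 1 = m + 2 by omega, show m + 2 - 1 = m + 1 by omega]
  simp only [zero_add, zero_pow (Nat.succ_ne_zero _)]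
  push_cast
  field_simp
  ring

end

/-- For the pure power model `λ(k) = C₀ k^α` (`C₀ > 0`, `α ≥ 4` even) and any `δ > 0`,
the function `F(k) = 1/(λ(k) − λ(k+δ)) + 1/(λ(k) − λ(k−δ))` satisfies
`F''(0) = −2 C₀⁻¹ α(α+1) δ^{−α−2}`, which is nonzero. -/
theorem stmt3 (C₀ : ℝ) (α : ℕ) (δ : ℝ)
    (hC₀ : 0 < C₀) (hα : 4 ≤ α) (heven : Even α) (hδ : 0 < δ) :
    deriv (deriv fun k : ℝ =>
        1 / (C₀ * k ^ α - C₀ * (k + δ) ^ α) + 1 / (C₀ * k ^ α - C₀ * (k - δ) ^ α)) 0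
      = -2 * C₀⁻¹ * (α : ℝ) * ((α : ℝ) + 1) / δ ^ (α + 2) ∧
    -2 * C₀⁻¹ * (α : ℝ) * ((α : ℝ) + 1) / δ ^ (α + 2) ≠ 0 := by
  have hplus := hasSecondDerivAt_one_div_mul_pow_sub_mul_add_pow_zero hC₀.ne' hδ.ne'
    (by omega : 3 ≤ α)
  have hminus := hasSecondDerivAt_one_div_mul_pow_sub_mul_add_pow_zero hC₀.ne'
    (neg_ne_zero.2 hδ.ne') (by omega : 3 ≤ α)
  simp only [← sub_eq_add_neg, (heven.add even_two).neg_pow] at hminus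
  refine ⟨(hplus.add hminus).deriv_deriv.trans ?_, ?_⟩
  · field_simp
    ring
  · have hα0 : (0 : ℝ) < α := by exact_mod_cast (by omega : 0 < α)
    have hpos : 0 < 2 * C₀⁻¹ * α * (α + 1) := by positivity
    exact (div_neg_of_neg_of_pos (by linarith) (by positivity)).ne
end

section
/- For real parameters V₀, V₁ and k₁, k₂, consider the 2×2 real symmetric matrix H(k) = [[V₀, c],[c, V₁]] with c = 2cos k₁ + 2cos k₂. Its eigenvalues are (V₀+V₁)/2 ± sqrt((V₀−V₁)²/4 + c²). As (k₁,k₂) ranges over ℝ², the set of all eigenvalues equals the union of the two closed intervals [ (V₀+V₁)/2 − sqrt((V₀−V₁)²/4 + 16), min{V₀,V₁} ] and [ max{V₀,V₁}, (V₀+V₁)/2 + sqrt((V₀−V₁)²/4 + 16) ]. -/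
/-! The characteristic polynomial of `H(k)` is `(V₀ - λ)(V₁ - λ) - c²`, and
`c² = (2 cos k₁ + 2 cos k₂)²` sweeps out exactly `[0, 16]`, so `λ` is an eigenvalue for some `k`
iff `0 ≤ (V₀ - λ)(V₁ - λ) ≤ 16`. The lower bound says that `λ` lies outside
`(min V₀ V₁, max V₀ V₁)`; completing the square turns the upper bound into
`|λ - (V₀ + V₁)/2| ≤ √((V₀ - V₁)²/4 + 16)`. -/

open Real

lemma det_sub_smul_one_fin_two_symm (a b c t : ℝ) :
    (!![a, c; c, b] - t • (1 : Matrix (Fin 2) (Fin 2) ℝ)).det = (a - t) * (b - t) - c ^ 2 := by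
  simp [Matrix.det_fin_two, sq]

lemma sub_mul_sub_eq_sq_sub (a b t : ℝ) :
    (a - t) * (b - t) = (t - (a + b) / 2) ^ 2 - (a - b) ^ 2 / 4 := by
  ring

lemma det_sub_smul_one_fin_two_symm_eq_zero_iff (a b c t : ℝ) :
    (!![a, c; c, b] - t • (1 : Matrix (Fin 2) (Fin 2) ℝ)).det = 0 ↔
      t = (a + b) / 2 + √((a - b) ^ 2 / 4 + c ^ 2) ∨
      t = (a + b) / 2 - √((a - b) ^ 2 / 4 + c ^ 2) := by
  set s := √((a - b) ^ 2 / 4 + c ^ 2)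
  have hs : s ^ 2 = (a - b) ^ 2 / 4 + c ^ 2 := sq_sqrt (by positivity)
  rw [det_sub_smul_one_fin_two_symm, sub_mul_sub_eq_sq_sub, sub_sub, sub_eq_zero, ← hs,
    sq_eq_sq_iff_eq_or_eq_neg, sub_eq_iff_eq_add', sub_eq_iff_eq_add', ← sub_eq_add_neg]

lemma sub_mul_sub_nonneg_iff_le_min_or_max_le {R : Type*} [CommRing R] [LinearOrder R]
    [IsStrictOrderedRing R] (a b t : R) :
    0 ≤ (a - t) * (b - t) ↔ t ≤ min a b ∨ max a b ≤ t := by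
  rw [mul_nonneg_iff, sub_nonneg, sub_nonneg, sub_nonpos, sub_nonpos, le_min_iff, max_le_iff]

lemma sub_mul_sub_le_iff (a b r t : ℝ) (hr : 0 ≤ r) :
    (a - t) * (b - t) ≤ r ↔
      (a + b) / 2 - √((a - b) ^ 2 / 4 + r) ≤ t ∧ t ≤ (a + b) / 2 + √((a - b) ^ 2 / 4 + r) := by
  rw [sub_mul_sub_eq_sq_sub, sub_le_iff_le_add, add_comm r, Real.sq_le (by positivity)]
  constructor <;> rintro ⟨h₁, h₂⟩ <;> constructor <;> linarith

lemma setOf_sub_mul_sub_mem_Icc (a b r : ℝ) (hr : 0 ≤ r) :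
    {t : ℝ | (a - t) * (b - t) ∈ Set.Icc 0 r} =
      Set.Icc ((a + b) / 2 - √((a - b) ^ 2 / 4 + r)) (min a b) ∪
        Set.Icc (max a b) ((a + b) / 2 + √((a - b) ^ 2 / 4 + r)) := by
  have hs := sqrt_nonneg ((a - b) ^ 2 / 4 + r)
  ext t
  simp only [Set.mem_ofPred_eq, Set.mem_Icc, Set.mem_union,
    sub_mul_sub_nonneg_iff_le_min_or_max_le, sub_mul_sub_le_iff a b r t hr]
  constructor
  · rintro ⟨h | h, h₁, h₂⟩
    · exact Or.inl ⟨h₁, h⟩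
    · exact Or.inr ⟨h, h₂⟩
  · rintro (⟨h₁, h⟩ | ⟨h, h₂⟩)
    · exact ⟨Or.inl h, h₁, by linarith [min_le_left a b, min_le_right a b]⟩
    · exact ⟨Or.inr h, by linarith [le_max_left a b, le_max_right a b], h₂⟩

lemma exists_sq_two_cos_add_two_cos_eq_iff (t : ℝ) :
    (∃ k₁ k₂ : ℝ, t = (2 * cos k₁ + 2 * cos k₂) ^ 2) ↔ t ∈ Set.Icc 0 16 := by
  constructor
  · rintro ⟨k₁, k₂, rfl⟩
    have h₁ := abs_cos_le_one k₁
    have h₂ := abs_cos_le_one k₂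
    have : |2 * cos k₁ + 2 * cos k₂| ≤ 4 :=
      calc _ ≤ |2 * cos k₁| + |2 * cos k₂| := abs_add_le _ _
        _ ≤ 4 := by simp only [abs_mul, abs_two]; linarith
    obtain ⟨hlo, hhi⟩ := abs_le.mp this
    exact ⟨sq_nonneg _, (sq_le_sq' hlo hhi).trans_eq (by norm_num)⟩
  · rintro ⟨h0, h16⟩
    have hs : √t ≤ 4 := (sqrt_le_left (by norm_num)).mpr (by linarith)
    -- `2 cos (arccos (√t / 2 - 1)) + 2 cos 0 = √t`
    refine ⟨arccos (√t / 2 - 1), 0, ?_⟩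
    rw [cos_arccos (by linarith [sqrt_nonneg t]) (by linarith), cos_zero]
    ring_nf
    exact (sq_sqrt h0).symm

/-- Spectrum of the checkerboard discrete Schrödinger fiber matrices: the eigenvalues of
`H(k) = [[V₀, c],[c, V₁]]` with `c = 2cos k₁ + 2cos k₂` are
`(V₀+V₁)/2 ± sqrt((V₀−V₁)²/4 + c²)`, and as `(k₁,k₂)` ranges over `ℝ²` the set of all
eigenvalues is the union of the two closed bands. -/
theorem stmt6 (V₀ V₁ : ℝ) :
    (∀ k₁ k₂ lam : ℝ,
      (Matrix.det
          (!![V₀, 2 * cos k₁ + 2 * cos k₂; 2 * cos k₁ + 2 * cos k₂, V₁]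
            - lam • (1 : Matrix (Fin 2) (Fin 2) ℝ)) = 0 ↔
        lam = (V₀ + V₁) / 2 + Real.sqrt ((V₀ - V₁) ^ 2 / 4 + (2 * cos k₁ + 2 * cos k₂) ^ 2) ∨
        lam = (V₀ + V₁) / 2 - Real.sqrt ((V₀ - V₁) ^ 2 / 4 + (2 * cos k₁ + 2 * cos k₂) ^ 2))) ∧
    {lam : ℝ | ∃ k₁ k₂ : ℝ,
        Matrix.det
          (!![V₀, 2 * cos k₁ + 2 * cos k₂; 2 * cos k₁ + 2 * cos k₂, V₁]
            - lam • (1 : Matrix (Fin 2) (Fin 2) ℝ)) = 0}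
      = Set.Icc ((V₀ + V₁) / 2 - Real.sqrt ((V₀ - V₁) ^ 2 / 4 + 16)) (min V₀ V₁) ∪
        Set.Icc (max V₀ V₁) ((V₀ + V₁) / 2 + Real.sqrt ((V₀ - V₁) ^ 2 / 4 + 16)) := by
  refine ⟨fun k₁ k₂ lam => det_sub_smul_one_fin_two_symm_eq_zero_iff V₀ V₁ _ lam, ?_⟩
  rw [← setOf_sub_mul_sub_mem_Icc V₀ V₁ 16 (by norm_num)]
  ext lam
  simp only [Set.mem_ofPred_eq, det_sub_smul_one_fin_two_symm, sub_eq_zero]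
  exact exists_sq_two_cos_add_two_cos_eq_iff _
end

section
/- For the checkerboard discrete Schrödinger operator with V₀ < V₁, the upper edge min{V₀,V₁} = V₀ of the lower band is attained by the eigenvalue branch λ₋(k) = (V₀+V₁)/2 − sqrt((V₀−V₁)²/4 + (2cos k₁ + 2cos k₂)²) exactly at those quasimomenta (k₁,k₂) with cos k₁ + cos k₂ = 0. In particular, the set of extremal quasimomenta in the fundamental domain is a one-dimensional curve (not a finite set), and this remains true for all nearby values of (V₀, V₁) with V₀ ≠ V₁. -/
open Real

/-- For the checkerboard operator with `V₀ < V₁`, the band function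
`λ₋(k) = (V₀+V₁)/2 − sqrt((V₀−V₁)²/4 + (2cos k₁ + 2cos k₂)²)` attains the band edge `V₀`
exactly at the quasimomenta with `cos k₁ + cos k₂ = 0`; this holds for all values of
`(V₀, V₁)` with `V₀ < V₁`, and the extremal set in the fundamental domain `[0,π]²` is
infinite (a one-dimensional curve, not a finite set). -/
theorem stmt8 :
    (∀ V₀ V₁ : ℝ, V₀ < V₁ → ∀ k₁ k₂ : ℝ,
      ((V₀ + V₁) / 2 - Real.sqrt ((V₀ - V₁) ^ 2 / 4 + (2 * cos k₁ + 2 * cos k₂) ^ 2) = V₀ ↔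
        cos k₁ + cos k₂ = 0)) ∧
    Set.Infinite
      ({p : ℝ × ℝ | cos p.1 + cos p.2 = 0} ∩ Set.Icc (0, 0) (π, π)) := by
  constructor
  · intro V₀ V₁ hV k₁ k₂
    set c : ℝ := 2 * cos k₁ + 2 * cos k₂ with hc
    have key : (V₀ + V₁) / 2 - Real.sqrt ((V₀ - V₁) ^ 2 / 4 + c ^ 2) = V₀ ↔ c = 0 := by
      constructor
      · intro h
        have hs : Real.sqrt ((V₀ - V₁) ^ 2 / 4 + c ^ 2) = (V₁ - V₀) / 2 := by linarith
        have h2 : (V₀ - V₁) ^ 2 / 4 + c ^ 2 = ((V₁ - V₀) / 2) ^ 2 := by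
          have := Real.sq_sqrt (by positivity : (0:ℝ) ≤ (V₀ - V₁) ^ 2 / 4 + c ^ 2)
          rw [hs] at this
          linarith [this]
        have : c ^ 2 = 0 := by ring_nf; ring_nf at h2; linarith
        exact pow_eq_zero_iff (n := 2) (by norm_num) |>.mp this
      · intro h
        rw [h]
        have : Real.sqrt ((V₀ - V₁) ^ 2 / 4 + 0 ^ 2) = (V₁ - V₀) / 2 := by
          rw [show (V₀ - V₁) ^ 2 / 4 + (0:ℝ) ^ 2 = ((V₁ - V₀) / 2) ^ 2 by ring]
          exact Real.sqrt_sq (by linarith)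
        rw [this]; ring
    rw [key, hc]
    constructor <;> intro h <;> linarith
  · have hsub : (fun t : ℝ => (t, π - t)) '' Set.Icc 0 π ⊆
        ({p : ℝ × ℝ | cos p.1 + cos p.2 = 0} ∩ Set.Icc (0, 0) (π, π)) := by
      rintro p ⟨t, ht, rfl⟩
      refine ⟨?_, ?_⟩
      · simp [Real.cos_pi_sub]
      · simp only [Set.mem_Icc, Prod.mk_le_mk]
        exact ⟨⟨ht.1, by linarith [ht.2]⟩, ⟨ht.2, by linarith [ht.1]⟩⟩
    have hinj : Function.Injective (fun t : ℝ => (t, π - t)) := by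
      intro a b h; simpa using congrArg Prod.fst h
    exact ((Set.Icc_infinite (by positivity : (0:ℝ) < π)).image
      (hinj.injOn)).mono hsub
end

section
/- Let a = 2cos k₁, b = 2cos k₂, V > 0, and consider the 4×4 real symmetric matrix H = [[V,a,0,b],[a,−V,b,0],[0,b,V,a],[b,0,a,−V]]. Then det(H − λI) = [(λ² − V²) − (a² + b²)]² − 4a²b², and the eigenvalues of H are ±sqrt(V² + (a+b)²) and ±sqrt(V² + (a−b)²). -/
open Matrix

abbrev checkerboardFiber (V a b : ℝ) : Matrix (Fin 4) (Fin 4) ℝ :=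
  !![V, a, 0, b; a, -V, b, 0; 0, b, V, a; b, 0, a, -V]

/- The matrix commutes with the swap of its two diagonal `2 × 2` blocks, and on the `±1` eigenspaces of
that swap it acts as `!![V, a ± b; a ± b, -V]`, whence one quadratic factor in `λ²` for each sign. -/
theorem det_checkerboardFiber_sub_smul_one (V a b lam : ℝ) :
    det (checkerboardFiber V a b - lam • (1 : Matrix (Fin 4) (Fin 4) ℝ)) =
      (lam ^ 2 - (V ^ 2 + (a + b) ^ 2)) * (lam ^ 2 - (V ^ 2 + (a - b) ^ 2)) := by
  rw [det_succ_row_zero, Fin.sum_univ_four]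
  simp [det_fin_three, Fin.succAbove, one_apply]
  ring

theorem sq_eq_iff_eq_sqrt_or_eq_neg_sqrt {x s : ℝ} (hs : 0 ≤ s) :
    x ^ 2 = s ↔ x = √s ∨ x = -√s := by
  rw [← sq_eq_sq_iff_eq_or_eq_neg, Real.sq_sqrt hs]

theorem stmt11_general (V a b : ℝ) :
    (∀ lam : ℝ,
      Matrix.det
        (!![V, a, 0, b; a, -V, b, 0; 0, b, V, a; b, 0, a, -V]
          - lam • (1 : Matrix (Fin 4) (Fin 4) ℝ))
        = ((lam ^ 2 - V ^ 2) - (a ^ 2 + b ^ 2)) ^ 2 - 4 * a ^ 2 * b ^ 2) ∧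
    (∀ lam : ℝ,
      Matrix.det
        (!![V, a, 0, b; a, -V, b, 0; 0, b, V, a; b, 0, a, -V]
          - lam • (1 : Matrix (Fin 4) (Fin 4) ℝ)) = 0 ↔
        lam = Real.sqrt (V ^ 2 + (a + b) ^ 2) ∨ lam = -Real.sqrt (V ^ 2 + (a + b) ^ 2) ∨
        lam = Real.sqrt (V ^ 2 + (a - b) ^ 2) ∨ lam = -Real.sqrt (V ^ 2 + (a - b) ^ 2)) := by
  refine ⟨fun lam => ?_, fun lam => ?_⟩
  · rw [det_checkerboardFiber_sub_smul_one]
    ring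
  · rw [det_checkerboardFiber_sub_smul_one, mul_eq_zero, sub_eq_zero, sub_eq_zero,
      sq_eq_iff_eq_sqrt_or_eq_neg_sqrt (by positivity),
      sq_eq_iff_eq_sqrt_or_eq_neg_sqrt (by positivity), or_assoc]

/-- Characteristic polynomial and eigenvalues of the 4×4 fiber matrix of the
checkerboard operator with doubled period:
`det(H − λI) = ((λ² − V²) − (a² + b²))² − 4a²b²`, and the eigenvalues are
`±sqrt(V² + (a+b)²)` and `±sqrt(V² + (a−b)²)`. -/
theorem stmt11 (V a b : ℝ) (hV : 0 < V) :
    (∀ lam : ℝ,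
      Matrix.det
        (!![V, a, 0, b; a, -V, b, 0; 0, b, V, a; b, 0, a, -V]
          - lam • (1 : Matrix (Fin 4) (Fin 4) ℝ))
        = ((lam ^ 2 - V ^ 2) - (a ^ 2 + b ^ 2)) ^ 2 - 4 * a ^ 2 * b ^ 2) ∧
    (∀ lam : ℝ,
      Matrix.det
        (!![V, a, 0, b; a, -V, b, 0; 0, b, V, a; b, 0, a, -V]
          - lam • (1 : Matrix (Fin 4) (Fin 4) ℝ)) = 0 ↔
        lam = Real.sqrt (V ^ 2 + (a + b) ^ 2) ∨ lam = -Real.sqrt (V ^ 2 + (a + b) ^ 2) ∨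
        lam = Real.sqrt (V ^ 2 + (a - b) ^ 2) ∨ lam = -Real.sqrt (V ^ 2 + (a - b) ^ 2)) :=
  stmt11_general V a b
end

section
/- With H as in the previous statement (4×4 matrix with parameters a,b,V, V>0): as (a,b) ranges over [−2,2]², the set of eigenvalues of H equals [−sqrt(V²+16), −V] ∪ [V, sqrt(V²+16)], and the eigenvalue V is attained exactly when a = b or a = −b. -/
/-! The determinant factors as `(λ² - V² - (a+b)²)(λ² - V² - (a-b)²)`, so `λ` is an eigenvalue
exactly when `λ² - V²` equals `(a+b)²` or `(a-b)²`. As `(a, b)` ranges over `[-2,2]²` these squares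
sweep out `[0, 16]` (already along the diagonal `a = b`), so `λ²` sweeps out `[V², V² + 16]`;
and `λ = V` forces one of `a ± b` to vanish. -/

open Set

lemma det_fiber_sub_smul_one (V a b lam : ℝ) :
    Matrix.det (!![V, a, 0, b; a, -V, b, 0; 0, b, V, a; b, 0, a, -V]
      - lam • (1 : Matrix (Fin 4) (Fin 4) ℝ))
    = (lam ^ 2 - V ^ 2 - (a + b) ^ 2) * (lam ^ 2 - V ^ 2 - (a - b) ^ 2) := by
  simp [Matrix.det_succ_row_zero, Fin.sum_univ_succ, Fin.succAbove, Matrix.one_apply]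
  ring

lemma exists_mem_Icc_sq_add_or_sq_sub_eq_iff {c s : ℝ} (hc : 0 ≤ c) :
    (∃ a b : ℝ, a ∈ Icc (-c) c ∧ b ∈ Icc (-c) c ∧ (s - (a + b) ^ 2) * (s - (a - b) ^ 2) = 0) ↔
      s ∈ Icc 0 ((2 * c) ^ 2) := by
  constructor
  · rintro ⟨a, b, ⟨ha₁, ha₂⟩, ⟨hb₁, hb₂⟩, hs⟩
    rcases mul_eq_zero.1 hs with hs | hs <;> rw [sub_eq_zero.1 hs] <;>
      exact ⟨sq_nonneg _, sq_le_sq' (by linarith) (by linarith)⟩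
  · rintro ⟨hs₀, hs⟩
    have hroot : √s ≤ 2 * c := (Real.sqrt_le_left (by positivity)).2 hs
    have hmem : √s / 2 ∈ Icc (-c) c := ⟨by linarith [Real.sqrt_nonneg s], by linarith⟩
    refine ⟨√s / 2, √s / 2, hmem, hmem, mul_eq_zero_of_left ?_ _⟩
    rw [add_halves, Real.sq_sqrt hs₀, sub_self]

lemma sq_mem_Icc_sq_iff {p q x : ℝ} (hp : 0 ≤ p) (hq : 0 ≤ q) :
    x ^ 2 ∈ Icc (p ^ 2) (q ^ 2) ↔ x ∈ Icc (-q) (-p) ∪ Icc p q := by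
  rw [mem_Icc, sq_le_sq, sq_le_sq, abs_of_nonneg hp, abs_of_nonneg hq, le_abs', abs_le]
  simp only [mem_union, mem_Icc]
  constructor
  · rintro ⟨h | h, hq₁, hq₂⟩
    · exact Or.inl ⟨hq₁, h⟩
    · exact Or.inr ⟨h, hq₂⟩
  · rintro (⟨h₁, h₂⟩ | ⟨h₁, h₂⟩)
    · exact ⟨Or.inl h₂, h₁, by linarith⟩
    · exact ⟨Or.inr h₁, by linarith, h₂⟩

/-- As `(a,b)` ranges over `[−2,2]²`, the eigenvalues of the 4×4 fiber matrix sweep the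
two bands `[−sqrt(V²+16), −V] ∪ [V, sqrt(V²+16)]`, and the band edge `V` is an eigenvalue
exactly when `a = b` or `a = −b`. -/
theorem stmt12 (V : ℝ) (hV : 0 < V) :
    {lam : ℝ | ∃ a b : ℝ, a ∈ Set.Icc (-2 : ℝ) 2 ∧ b ∈ Set.Icc (-2 : ℝ) 2 ∧
        Matrix.det
          (!![V, a, 0, b; a, -V, b, 0; 0, b, V, a; b, 0, a, -V]
            - lam • (1 : Matrix (Fin 4) (Fin 4) ℝ)) = 0}
      = Set.Icc (-Real.sqrt (V ^ 2 + 16)) (-V) ∪ Set.Icc V (Real.sqrt (V ^ 2 + 16)) ∧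
    ∀ a b : ℝ, a ∈ Set.Icc (-2 : ℝ) 2 → b ∈ Set.Icc (-2 : ℝ) 2 →
      (Matrix.det
          (!![V, a, 0, b; a, -V, b, 0; 0, b, V, a; b, 0, a, -V]
            - V • (1 : Matrix (Fin 4) (Fin 4) ℝ)) = 0 ↔ a = b ∨ a = -b) := by
  constructor
  · ext lam
    rw [← sq_mem_Icc_sq_iff hV.le (Real.sqrt_nonneg _), Real.sq_sqrt (by positivity)]
    simp only [mem_ofPred_eq, det_fiber_sub_smul_one]
    rw [exists_mem_Icc_sq_add_or_sq_sub_eq_iff zero_le_two, mem_Icc, mem_Icc]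
    constructor <;> rintro ⟨h₁, h₂⟩ <;> constructor <;> linarith
  · intro a b _ _
    rw [det_fiber_sub_smul_one, sub_self, zero_sub, zero_sub, neg_mul_neg, mul_eq_zero,
      pow_eq_zero_iff two_ne_zero, pow_eq_zero_iff two_ne_zero, add_eq_zero_iff_eq_neg,
      sub_eq_zero, or_comm]
end
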